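/- Let 1 ≤ k ≤ n and 1 ≤ l ≤ m be natural numbers with k ≤ l and m - l ≤ n - k. Then the ratio H_{k|n}(p)/H_{l|m}(p) is decreasing in p ∈ (0,1), where H_{k|n}(p) = p h'_{k|n}(p)/h_{k|n}(p) with h_{k|n}(p) = (1/B(k,n-k+1)) ∫₀^p u^{k-1}(1-u)^{n-k} du. -/

import Mathlib

/-!
Substituting `u = p x` gives `∫₀^p u^c (1-u)^a du = p^(c+1) (1-p)^a G_{c,a}(p)` with
`G_{c,a}(p) = ∫₀¹ x^c w_p(x)^a dx` and `w_p(x) = (1 - x p)/(1 - p)`, so that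
`H_{k|n} = 1 / G_{k-1,n-k}`. It therefore suffices to show
`G_{κ,a}(p) G_{λ,b}(q) ≤ G_{κ,a}(q) G_{λ,b}(p)` for `p ≤ q`, `κ ≤ λ`, `b ≤ a`.
Writing both sides as double integrals over `[0,1]²` and symmetrising in `(x, y)`, this reduces
to a pointwise inequality, which holds because `w` is increasing in `p`, decreasing in `x`, and
totally positive of order two in `(x, p)`.
-/

noncomputable def koonB (k n : ℕ) : ℝ :=
  ∫ u in (0:ℝ)..1, u ^ (k - 1) * (1 - u) ^ (n - k)

noncomputable def koonRel (k n : ℕ) (p : ℝ) : ℝ :=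
  (1 / koonB k n) * ∫ u in (0:ℝ)..p, u ^ (k - 1) * (1 - u) ^ (n - k)

noncomputable def koonH (k n : ℕ) (p : ℝ) : ℝ :=
  p * (p ^ (k - 1) * (1 - p) ^ (n - k) / koonB k n) / koonRel k n p

open intervalIntegral Set
open MeasureTheory (volume)

theorem intervalIntegral.integral_mul_integral_le_of_symm {A B C D : ℝ → ℝ} {a b : ℝ}
    (hab : a ≤ b) (hA : IntervalIntegrable A volume a b) (hB : IntervalIntegrable B volume a b)
    (hC : IntervalIntegrable C volume a b) (hD : IntervalIntegrable D volume a b)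
    (h : ∀ x ∈ Icc a b, ∀ y ∈ Icc a b, A x * B y + A y * B x ≤ C x * D y + C y * D x) :
    (∫ x in a..b, A x) * (∫ x in a..b, B x) ≤
      (∫ x in a..b, C x) * (∫ x in a..b, D x) := by
  have inner : ∀ x ∈ Icc a b, A x * (∫ y in a..b, B y) + (∫ y in a..b, A y) * B x ≤
      C x * (∫ y in a..b, D y) + (∫ y in a..b, C y) * D x := by
    intro x hx
    have := integral_mono_on hab ((hB.const_mul (A x)).add (hA.mul_const (B x)))
      ((hD.const_mul (C x)).add (hC.mul_const (D x))) (h x hx)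
    rwa [integral_add (hB.const_mul _) (hA.mul_const _), integral_add (hD.const_mul _)
      (hC.mul_const _), integral_const_mul, integral_mul_const, integral_const_mul,
      integral_mul_const] at this
  have := integral_mono_on hab ((hA.mul_const _).add (hB.const_mul _))
    ((hC.mul_const _).add (hD.const_mul _)) inner
  rw [integral_add (hA.mul_const _) (hB.const_mul _), integral_add (hC.mul_const _)
    (hD.const_mul _), integral_const_mul, integral_mul_const, integral_const_mul,
    integral_mul_const] at this
  linarith

theorem mul_pow_add_mul_le_of_mul_le_mul {u v X X' Y Y' : ℝ} (b d : ℕ) (hu : 0 ≤ u)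
    (hv : 0 ≤ v) (hX : 0 ≤ X) (hXX' : X ≤ X') (hY : 0 ≤ Y) (hYY' : Y ≤ Y') (hcross : X * Y' ≤ X' * Y)
    (hvu : v * Y ^ d ≤ u * X ^ d) :
    u * X ^ (b + d) * Y' ^ b + v * Y ^ (b + d) * X' ^ b ≤
      u * X' ^ (b + d) * Y ^ b + v * Y' ^ (b + d) * X ^ b := by
  have hα : 0 ≤ (X * Y') ^ b := pow_nonneg (mul_nonneg hX (hY.trans hYY')) b
  have hβ : 0 ≤ (X' * Y) ^ b := pow_nonneg (mul_nonneg (hX.trans hXX') hY) b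
  have hpow : (X * Y') ^ b ≤ (X' * Y) ^ b :=
    pow_le_pow_left₀ (mul_nonneg hX (hY.trans hYY')) hcross b
  have hprod := mul_nonneg (sub_nonneg.2 hvu) (sub_nonneg.2 hpow)
  calc u * X ^ (b + d) * Y' ^ b + v * Y ^ (b + d) * X' ^ b
      = u * X ^ d * (X * Y') ^ b + v * Y ^ d * (X' * Y) ^ b := by ring
    _ ≤ u * X ^ d * (X' * Y) ^ b + v * Y ^ d * (X * Y') ^ b := by linarith
    _ ≤ u * X' ^ d * (X' * Y) ^ b + v * Y' ^ d * (X * Y') ^ b := by gcongr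
    _ = u * X' ^ (b + d) * Y ^ b + v * Y' ^ (b + d) * X ^ b := by ring

noncomputable def betaWeight (p x : ℝ) : ℝ := (1 - x * p) / (1 - p)

noncomputable def betaMoment (c a : ℕ) (p : ℝ) : ℝ :=
  ∫ x in (0:ℝ)..1, x ^ c * betaWeight p x ^ a

section betaWeight

variable {p q x y : ℝ}

@[fun_prop]
theorem continuous_betaWeight (p : ℝ) : Continuous (betaWeight p) := by
  unfold betaWeight; fun_prop

theorem betaWeight_pos (hp : p < 1) (hx : 0 ≤ x) (hx1 : x ≤ 1) : 0 < betaWeight p x := by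
  refine div_pos ?_ (by linarith)
  rcases le_total 0 p with hp0 | hp0 <;> nlinarith

theorem betaWeight_mono_left (hx1 : x ≤ 1) (hpq : p ≤ q) (hq : q < 1) :
    betaWeight p x ≤ betaWeight q x := by
  rw [betaWeight, betaWeight, div_le_div_iff₀ (by linarith) (by linarith)]
  nlinarith

theorem betaWeight_anti_right (hp : 0 ≤ p) (hp1 : p < 1) (hxy : x ≤ y) :
    betaWeight p y ≤ betaWeight p x :=
  div_le_div_of_nonneg_right (by nlinarith) (by linarith)

theorem betaWeight_mul_betaWeight_le (hxy : x ≤ y) (hpq : p ≤ q) (hq : q < 1) :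
    betaWeight p x * betaWeight q y ≤ betaWeight q x * betaWeight p y := by
  rw [betaWeight, betaWeight, betaWeight, betaWeight, div_mul_div_comm, div_mul_div_comm,
    mul_comm (1 - q)]
  exact div_le_div_of_nonneg_right (by nlinarith) (by nlinarith)

end betaWeight

theorem integral_pow_mul_one_sub_pow_pos (c a : ℕ) {p : ℝ} (hp : 0 < p) (hp1 : p ≤ 1) :
    0 < ∫ u in (0:ℝ)..p, u ^ c * (1 - u) ^ a := by
  refine intervalIntegral_pos_of_pos_on (Continuous.intervalIntegrable (by fun_prop) _ _)
    (fun u hu => ?_) hp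
  have : 0 < 1 - u := by linarith [hu.2]
  have := hu.1
  positivity

theorem integral_pow_mul_one_sub_pow_eq (c a : ℕ) {p : ℝ} (hp : p ≠ 1) :
    ∫ u in (0:ℝ)..p, u ^ c * (1 - u) ^ a = p ^ (c + 1) * (1 - p) ^ a * betaMoment c a p := by
  have hp' : 1 - p ≠ 0 := sub_ne_zero.2 hp.symm
  have hsub := smul_integral_comp_mul_left (a := 0) (b := 1) (fun u => u ^ c * (1 - u) ^ a) p
  rw [mul_zero, mul_one] at hsub
  rw [← hsub, betaMoment, ← integral_const_mul, smul_eq_mul, ← integral_const_mul]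
  refine integral_congr fun x _ => ?_
  simp only [betaWeight, div_pow]
  field_simp
  ring

theorem betaMoment_pos (c a : ℕ) {p : ℝ} (hp : p < 1) : 0 < betaMoment c a p := by
  refine intervalIntegral_pos_of_pos_on (Continuous.intervalIntegrable (by fun_prop) _ _)
    (fun x hx => ?_) one_pos
  have := betaWeight_pos hp hx.1.le hx.2.le
  have := hx.1
  positivity

theorem koonH_eq_inv_betaMoment (k n : ℕ) {p : ℝ} (hp : 0 < p) (hp1 : p < 1) :
    koonH k n p = (betaMoment (k - 1) (n - k) p)⁻¹ := by
  have hB : koonB k n ≠ 0 := (integral_pow_mul_one_sub_pow_pos _ _ one_pos le_rfl).ne'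
  have hG := (betaMoment_pos (k - 1) (n - k) hp1).ne'
  have : 1 - p ≠ 0 := by linarith
  rw [koonH, koonRel, integral_pow_mul_one_sub_pow_eq _ _ hp1.ne]
  field_simp
  ring

theorem pow_mul_betaWeight_pow_le (κ e b d : ℕ) {p q x y : ℝ} (hp : 0 ≤ p) (hpq : p ≤ q)
    (hq : q < 1) (hx : 0 ≤ x) (hxy : x ≤ y) (hy : y ≤ 1) :
    x ^ κ * betaWeight p x ^ (b + d) * (y ^ (κ + e) * betaWeight q y ^ b) +
        y ^ κ * betaWeight p y ^ (b + d) * (x ^ (κ + e) * betaWeight q x ^ b) ≤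
      x ^ κ * betaWeight q x ^ (b + d) * (y ^ (κ + e) * betaWeight p y ^ b) +
        y ^ κ * betaWeight q y ^ (b + d) * (x ^ (κ + e) * betaWeight p x ^ b) := by
  have hy0 : 0 ≤ y := hx.trans hxy
  have hmonomial : y ^ κ * x ^ (κ + e) ≤ x ^ κ * y ^ (κ + e) :=
    calc y ^ κ * x ^ (κ + e) = x ^ κ * y ^ κ * x ^ e := by ring
      _ ≤ x ^ κ * y ^ κ * y ^ e := by gcongr
      _ = x ^ κ * y ^ (κ + e) := by ring
  have hpx := betaWeight_pos (hpq.trans_lt hq) hx (hxy.trans hy)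
  have hpy := betaWeight_pos (hpq.trans_lt hq) hy0 hy
  have hweight : betaWeight p y ^ d ≤ betaWeight p x ^ d :=
    pow_le_pow_left₀ hpy.le (betaWeight_anti_right hp (hpq.trans_lt hq) hxy) d
  have key := mul_pow_add_mul_le_of_mul_le_mul b d (u := x ^ κ * y ^ (κ + e))
    (v := y ^ κ * x ^ (κ + e)) (by positivity) (by positivity)
    hpx.le (betaWeight_mono_left (hxy.trans hy) hpq hq)
    hpy.le (betaWeight_mono_left hy hpq hq) (betaWeight_mul_betaWeight_le hxy hpq hq)
    (mul_le_mul hmonomial hweight (by positivity) (by positivity))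
  convert key using 1 <;> ring

theorem betaMoment_mul_betaMoment_le {κ l a b : ℕ} (hκl : κ ≤ l) (hba : b ≤ a) {p q : ℝ}
    (hp : 0 ≤ p) (hpq : p ≤ q) (hq : q < 1) :
    betaMoment κ a p * betaMoment l b q ≤ betaMoment κ a q * betaMoment l b p := by
  obtain ⟨e, rfl⟩ := Nat.exists_eq_add_of_le hκl
  obtain ⟨d, rfl⟩ := Nat.exists_eq_add_of_le hba
  have hint (c a : ℕ) (p : ℝ) :
      IntervalIntegrable (fun x => x ^ c * betaWeight p x ^ a) volume 0 1 :=
    Continuous.intervalIntegrable (by fun_prop) _ _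
  refine integral_mul_integral_le_of_symm zero_le_one (hint _ _ _) (hint _ _ _) (hint _ _ _)
    (hint _ _ _) fun x hx y hy => ?_
  rcases le_total x y with hxy | hyx
  · exact pow_mul_betaWeight_pow_le κ e b d hp hpq hq hx.1 hxy hy.2
  · linarith [pow_mul_betaWeight_pow_le κ e b d hp hpq hq hy.1 hyx hx.2]

theorem koonH_ratio_decreasing_general (k n l m : ℕ) (hkl : k ≤ l) (hml : m - l ≤ n - k) :
    AntitoneOn (fun p => koonH k n p / koonH l m p) (Set.Ioo (0 : ℝ) 1) := by
  intro p hp q hq hpq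
  simp only [koonH_eq_inv_betaMoment _ _ hp.1 hp.2, koonH_eq_inv_betaMoment _ _ hq.1 hq.2,
    inv_div_inv]
  rw [div_le_div_iff₀ (betaMoment_pos _ _ hq.2) (betaMoment_pos _ _ hp.2)]
  linarith [betaMoment_mul_betaMoment_le (Nat.sub_le_sub_right hkl 1) hml hp.1.le hpq hq.2]

theorem koonH_ratio_decreasing (k n l m : ℕ) (hk : 1 ≤ k) (hkn : k ≤ n)
    (hl : 1 ≤ l) (hlm : l ≤ m) (hkl : k ≤ l) (hml : m - l ≤ n - k) :
    AntitoneOn (fun p => koonH k n p / koonH l m p) (Set.Ioo (0 : ℝ) 1) :=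
  koonH_ratio_decreasing_general k n l m hkl hml
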